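/- arXiv:1610.00209 — 4 statements merged into one kernel-verified Lean document; each statement's English description precedes it below -/
import Mathlib

section
/- If a homogeneous polynomial p ∈ ℝ[x₁,…,xₙ] is hyperbolic with respect to e ∈ ℝⁿ, then its hyperbolicity cone K(p,e) is an open convex cone. -/
open Polynomial MvPolynomial

/-- A homogeneous polynomial `p` is hyperbolic with respect to `e` if `p(e) > 0` and for
every `x` the univariate polynomial `t ↦ p(te + x)` has only real roots. -/
def Hyperbolic {n : ℕ} (p : MvPolynomial (Fin n) ℝ) (e : Fin n → ℝ) : Prop :=
  0 < MvPolynomial.eval e p ∧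
    ∀ x : Fin n → ℝ, ∀ z : ℂ,
      Polynomial.aeval z
        (MvPolynomial.aeval
          (fun i => Polynomial.C (x i) + Polynomial.C (e i) * Polynomial.X) p) = 0 →
      z.im = 0

/-- The hyperbolicity cone `K(p, e)`: the connected component of
`{x : p(x) ≠ 0}` containing `e`. -/
def hypCone {n : ℕ} (p : MvPolynomial (Fin n) ℝ) (e : Fin n → ℝ) : Set (Fin n → ℝ) :=
  connectedComponentIn {x : Fin n → ℝ | MvPolynomial.eval x p ≠ 0} e

/-!
Let `Λ(e) = rayCone p e = {v | p(v + t e) ≠ 0 for all t ≥ 0}`; by hyperbolicity the roots of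
`s ↦ p(v + s e)` are real, so `v ∈ Λ(e)` iff they all have negative real part. As long as
`p(x) ≠ 0`, the roots of `s ↦ p(w + s x)` depend continuously on `w ∈ ℂⁿ` (there are exactly
`deg p` of them, and they stay bounded), so along a connected family of `w` they cannot leave an
open set without crossing its frontier.

Fix `x ∈ Λ(e)`. Deforming `r • y + i e` from `r = 0`, where homogeneity reduces everything to
the `e`-direction, shows that all roots of `s ↦ p(y + i ε e + s x)` with `ε > 0` lie in the open
lower half-plane; letting `ε → 0`, `p` is hyperbolic with respect to `x`. Deforming `z ∈ Λ(e)`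
to `e` along a segment, which avoids `p = 0`, then gives `Λ(e) ⊆ Λ(x)`, so `Λ(x) = Λ(e)` by
symmetry. Since `Λ(x)` is star-shaped about `x`, `Λ(e)` is convex. Continuity of roots also makes
`Λ(e)` and its complement in `{p ≠ 0}` open, so `Λ(e)` is the connected component `K(p, e)`.
-/

open Filter Topology

section Polynomials

variable {ι : Type*} {d : ℕ}

theorem MvPolynomial.IsHomogeneous.aeval_smul {R A : Type*} [CommSemiring R] [CommSemiring A]
    [Algebra R A] {p : MvPolynomial ι R} (hp : p.IsHomogeneous d) (c : A) (w : ι → A) :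
    MvPolynomial.aeval (c • w) p = c ^ d * MvPolynomial.aeval w p := by
  rw [p.as_sum, map_sum, map_sum, Finset.mul_sum]
  refine Finset.sum_congr rfl fun m hm => ?_
  rw [aeval_monomial, aeval_monomial, ← hp (mem_support_iff.mp hm), Finsupp.weight_apply]
  simp only [Pi.smul_apply, smul_eq_mul, mul_pow, Finsupp.prod, Finset.prod_mul_distrib,
    Finset.prod_pow_eq_pow_sum, Finsupp.sum, Pi.one_apply, mul_one]
  ring

theorem MvPolynomial.IsHomogeneous.eval_smul {p : MvPolynomial ι ℝ} (hp : p.IsHomogeneous d)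
    (c : ℝ) (w : ι → ℝ) : MvPolynomial.eval (c • w) p = c ^ d * MvPolynomial.eval w p :=
  hp.aeval_smul c w

theorem MvPolynomial.continuous_aeval {R A : Type*} [CommSemiring R] [CommSemiring A]
    [Algebra R A] [TopologicalSpace A] [IsTopologicalSemiring A] (p : MvPolynomial ι R) :
    Continuous fun w : ι → A => MvPolynomial.aeval w p := by
  simp_rw [MvPolynomial.aeval_def, ← MvPolynomial.eval_map]
  exact continuous_eval _

theorem Finsupp.prod_pow_eq_prod_map_toMultiset {R : Type*} [CommMonoid R] (f : ι → R)
    (m : ι →₀ ℕ) : (m.prod fun i k => f i ^ k) = (m.toMultiset.map f).prod := by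
  rw [Finsupp.toMultiset_map, Finsupp.prod_toMultiset,
    Finsupp.prod_mapDomain_index (fun _ => pow_zero _) (fun _ _ _ => pow_add _ _ _)]

theorem Finsupp.card_toMultiset_eq_degree (m : ι →₀ ℕ) :
    Multiset.card m.toMultiset = m.degree := by
  simp [Finsupp.degree_apply, Finsupp.sum]

theorem Finsupp.weight_one_eq_degree (m : ι →₀ ℕ) : Finsupp.weight 1 m = m.degree := by
  rw [Finsupp.degree_eq_weight_one]
  rfl

theorem Polynomial.natDegree_finsuppProd_pow_le {R : Type*} [CommSemiring R] {f : ι → R[X]}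
    (hf : ∀ i, (f i).natDegree ≤ 1) (m : ι →₀ ℕ) :
    (m.prod fun i k => f i ^ k).natDegree ≤ m.degree := by
  rw [Finsupp.prod_pow_eq_prod_map_toMultiset, ← Finsupp.card_toMultiset_eq_degree]
  refine (natDegree_multiset_prod_le _).trans ((Multiset.sum_le_card_nsmul _ 1 ?_).trans ?_)
  · simp only [Multiset.map_map, Multiset.mem_map]
    rintro _ ⟨i, -, rfl⟩
    exact hf i
  · simp

theorem Polynomial.coeff_finsuppProd_pow {R : Type*} [CommSemiring R] {f : ι → R[X]}
    (hf : ∀ i, (f i).natDegree ≤ 1) (m : ι →₀ ℕ) :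
    (m.prod fun i k => f i ^ k).coeff m.degree = m.prod fun i k => (f i).coeff 1 ^ k := by
  rw [Finsupp.prod_pow_eq_prod_map_toMultiset, Finsupp.prod_pow_eq_prod_map_toMultiset,
    ← Finsupp.card_toMultiset_eq_degree, ← Multiset.card_map f, ← mul_one (Multiset.card _),
    coeff_multiset_prod_of_natDegree_le _ 1, Multiset.map_map]
  · rfl
  · simp only [Multiset.mem_map]
    rintro _ ⟨i, -, rfl⟩
    exact hf i

end Polynomials

section RootContinuity

variable {ι : Type*} {d : ℕ} {p : MvPolynomial ι ℝ}

noncomputable def linePoly (p : MvPolynomial ι ℝ) (w x : ι → ℂ) : ℂ[X] :=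
  MvPolynomial.aeval (fun i => Polynomial.C (w i) + Polynomial.C (x i) * Polynomial.X) p

theorem eval_linePoly (w x : ι → ℂ) (s : ℂ) :
    (linePoly p w x).eval s = MvPolynomial.aeval (w + s • x) p := by
  have := DFunLike.congr_fun (MvPolynomial.comp_aeval (R := ℝ)
    (fun i => Polynomial.C (w i) + Polynomial.C (x i) * Polynomial.X)
    ((Polynomial.aeval s).restrictScalars ℝ)) p
  simp only [AlgHom.comp_apply, AlgHom.restrictScalars_apply, Polynomial.coe_aeval_eq_eval] at this
  rw [linePoly, this]
  congr 2
  funext i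
  simp only [Polynomial.eval_add, Polynomial.eval_mul, Polynomial.eval_C, Polynomial.eval_X,
    Pi.add_apply, Pi.smul_apply, smul_eq_mul]
  ring

theorem natDegree_linePoly_le (hp : p.IsHomogeneous d) (w x : ι → ℂ) :
    (linePoly p w x).natDegree ≤ d := by
  rw [linePoly, p.as_sum, map_sum]
  refine natDegree_sum_le_of_forall_le _ _ fun m hm => ?_
  rw [MvPolynomial.aeval_monomial, Polynomial.algebraMap_apply, ← hp (mem_support_iff.mp hm),
    Finsupp.weight_one_eq_degree]
  exact (natDegree_C_mul_le _ _).trans (natDegree_finsuppProd_pow_le (fun i => by compute_degree) m)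

theorem coeff_linePoly (hp : p.IsHomogeneous d) (w x : ι → ℂ) :
    (linePoly p w x).coeff d = MvPolynomial.aeval x p := by
  rw [linePoly, p.as_sum, map_sum, map_sum, finsetSum_coeff]
  refine Finset.sum_congr rfl fun m hm => ?_
  rw [MvPolynomial.aeval_monomial, MvPolynomial.aeval_monomial, Polynomial.algebraMap_apply,
    Polynomial.coeff_C_mul, ← hp (mem_support_iff.mp hm), Finsupp.weight_one_eq_degree,
    coeff_finsuppProd_pow (fun i => by compute_degree)]
  simp

variable (hp : p.IsHomogeneous d) {x : ι → ℂ} (hx : MvPolynomial.aeval x p ≠ 0)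
include hp hx

theorem natDegree_linePoly (w : ι → ℂ) : (linePoly p w x).natDegree = d :=
  (natDegree_linePoly_le hp w x).antisymm
    (le_natDegree_of_ne_zero (by rwa [coeff_linePoly hp]))

theorem norm_aeval_mul_pow_le_of_roots_far {w : ι → ℂ} {s : ℂ} {ε : ℝ} (hε : 0 ≤ ε)
    (h : ∀ r, MvPolynomial.aeval (w + r • x) p = 0 → ε ≤ ‖s - r‖) :
    ‖MvPolynomial.aeval x p‖ * ε ^ d ≤ ‖MvPolynomial.aeval (w + s • x) p‖ := by
  have hq : linePoly p w x ≠ 0 := fun h =>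
    hx (by rw [← coeff_linePoly hp w x, h, Polynomial.coeff_zero])
  have hlc : (linePoly p w x).leadingCoeff = MvPolynomial.aeval x p := by
    rw [leadingCoeff, natDegree_linePoly hp hx, coeff_linePoly hp]
  have hcard : Multiset.card (linePoly p w x).roots = d :=
    IsAlgClosed.card_roots_eq_natDegree.trans (natDegree_linePoly hp hx w)
  rw [← eval_linePoly, ← C_leadingCoeff_mul_prod_multiset_X_sub_C (p := linePoly p w x)
    IsAlgClosed.card_roots_eq_natDegree, Polynomial.eval_mul, Polynomial.eval_C,
    Polynomial.eval_multiset_prod, norm_mul, hlc, Multiset.map_map, ← hcard]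
  gcongr
  rw [← normHom_apply, map_multiset_prod, Multiset.map_map, ← Multiset.prod_replicate,
    ← Multiset.map_const']
  refine Multiset.prod_map_le_prod_map₀ _ _ (fun _ _ => hε) fun r hr => ?_
  simpa using h r (by rwa [mem_roots hq, IsRoot, eval_linePoly] at hr)

theorem eventually_exists_root_dist_lt {w₀ : ι → ℂ} {s₀ : ℂ}
    (h₀ : MvPolynomial.aeval (w₀ + s₀ • x) p = 0) {ε : ℝ} (hε : 0 < ε) :
    ∀ᶠ w in 𝓝 w₀, ∃ s, ‖s₀ - s‖ < ε ∧ MvPolynomial.aeval (w + s • x) p = 0 := by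
  have hlim : Tendsto (fun w => ‖MvPolynomial.aeval (w + s₀ • x) p‖) (𝓝 w₀) (𝓝 0) := by
    have := ((MvPolynomial.continuous_aeval p).comp (continuous_add_const (s₀ • x))).tendsto w₀
    simpa [h₀] using this.norm
  have hpos : 0 < ‖MvPolynomial.aeval x p‖ * ε ^ d := by positivity
  filter_upwards [hlim.eventually (gt_mem_nhds hpos)] with w hw
  by_contra! hfar
  exact hw.not_ge (norm_aeval_mul_pow_le_of_roots_far hp hx hε.le
    fun r hr => le_of_not_gt fun h => hfar r h hr)

theorem isOpen_setOf_exists_root {V : Set ℂ} (hV : IsOpen V) :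
    IsOpen {w | ∃ s ∈ V, MvPolynomial.aeval (w + s • x) p = 0} := by
  refine isOpen_iff_eventually.mpr fun w₀ ⟨s₀, hs₀, h₀⟩ => ?_
  obtain ⟨ε, hε, hball⟩ := Metric.isOpen_iff.mp hV s₀ hs₀
  filter_upwards [eventually_exists_root_dist_lt hp hx h₀ hε] with w ⟨s, hs, hroot⟩
  exact ⟨s, hball (by rwa [Metric.mem_ball, dist_comm, dist_eq_norm]), hroot⟩

theorem exists_eventually_norm_root_le (w₀ : ι → ℂ) :
    ∃ M : ℝ, ∀ᶠ w in 𝓝 w₀, ∀ s : ℂ, MvPolynomial.aeval (w + s • x) p = 0 → ‖s‖ ≤ M := by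
  have hc : Continuous fun z : ℂ × (ι → ℂ) => MvPolynomial.aeval (z.1 • z.2 + x) p :=
    (MvPolynomial.continuous_aeval p).comp
      ((continuous_fst.smul continuous_snd).add continuous_const)
  have hne : ∀ᶠ z in 𝓝 ((0 : ℂ), w₀), MvPolynomial.aeval (z.1 • z.2 + x) p ≠ 0 :=
    hc.continuousAt.eventually_ne (by simpa using hx)
  rw [nhds_prod_eq] at hne
  obtain ⟨A, hA, B, hB, hAB⟩ := Filter.eventually_prod_iff.mp hne
  obtain ⟨δ, hδ, hδA⟩ := Metric.eventually_nhds_iff.mp hA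
  refine ⟨δ⁻¹, hB.mono fun w hw s hs => ?_⟩
  by_contra! hlt
  have hs0 : s ≠ 0 := norm_pos_iff.mp ((inv_pos.mpr hδ).trans hlt)
  -- `p(w + s x) = s ^ d p(s⁻¹ w + x)`, and `s⁻¹ w + x` is close to `x`
  refine hAB (x := s⁻¹) (hδA ?_) hw ?_
  · rw [dist_zero_right, norm_inv]
    exact inv_lt_of_inv_lt₀ hδ hlt
  · have := hp.aeval_smul s (s⁻¹ • w + x)
    rw [smul_add, smul_inv_smul₀ hs0, hs] at this
    exact (mul_eq_zero.mp this.symm).resolve_left (pow_ne_zero _ hs0)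

theorem isOpen_setOf_roots_subset {U : Set ℂ} (hU : IsOpen U) :
    IsOpen {w | ∀ s, MvPolynomial.aeval (w + s • x) p = 0 → s ∈ U} := by
  refine isOpen_iff_eventually.mpr fun w₀ hw₀ => ?_
  obtain ⟨M, hM⟩ := exists_eventually_norm_root_le hp hx w₀
  have hK : IsCompact (Metric.closedBall (0 : ℂ) M \ U) := (isCompact_closedBall 0 M).diff hU
  have hnz : ∀ᶠ w in 𝓝 w₀, ∀ s ∈ Metric.closedBall (0 : ℂ) M \ U,
      MvPolynomial.aeval (w + s • x) p ≠ 0 :=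
    hK.eventually_forall_of_forall_eventually fun s hs =>
      ((MvPolynomial.continuous_aeval p).comp
        (continuous_fst.add (continuous_snd.smul continuous_const))).continuousAt.eventually_ne
        fun h => hs.2 (hw₀ s h)
  filter_upwards [hM, hnz] with w hwM hwK s hs
  by_contra hsU
  exact hwK s ⟨mem_closedBall_zero_iff.mpr (hwM s hs), hsU⟩ hs

theorem mem_of_isPreconnected_of_roots_notMem_frontier {X : Type*} [TopologicalSpace X]
    {T : Set X} (hT : IsPreconnected T) {f : X → ι → ℂ} (hf : Continuous f) {U : Set ℂ}
    (hU : IsOpen U)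
    (hfr : ∀ t ∈ T, ∀ s, MvPolynomial.aeval (f t + s • x) p = 0 → s ∉ frontier U) {t₀ : X}
    (ht₀ : t₀ ∈ T) (h₀ : ∀ s, MvPolynomial.aeval (f t₀ + s • x) p = 0 → s ∈ U) {t : X}
    (ht : t ∈ T) {s : ℂ} (hs : MvPolynomial.aeval (f t + s • x) p = 0) : s ∈ U := by
  refine hT.subset_left_of_subset_union ((isOpen_setOf_roots_subset hp hx hU).preimage hf)
    ((isOpen_setOf_exists_root hp hx isClosed_closure.isOpen_compl).preimage hf)
    (Set.disjoint_left.mpr fun t hgood ⟨s, hs, hroot⟩ => hs (subset_closure (hgood s hroot)))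
    (fun t ht => ?_) ⟨t₀, ht₀, h₀⟩ ht s hs
  by_cases hgood : ∀ s, MvPolynomial.aeval (f t + s • x) p = 0 → s ∈ U
  · exact Or.inl hgood
  · push Not at hgood
    obtain ⟨s, hroot, hsU⟩ := hgood
    refine Or.inr ⟨s, fun hcl => hfr t ht s hroot ⟨hcl, ?_⟩, hroot⟩
    rwa [hU.interior_eq]

end RootContinuity

section RealPoints

variable {ι : Type*}

noncomputable def ofRealVec (v : ι → ℝ) : ι → ℂ := fun i => (v i : ℂ)

@[simp]
theorem ofRealVec_apply (v : ι → ℝ) (i : ι) : ofRealVec v i = v i := rfl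

@[simp]
theorem ofRealVec_add (v w : ι → ℝ) : ofRealVec (v + w) = ofRealVec v + ofRealVec w := by
  ext i; simp

@[simp]
theorem ofRealVec_smul (c : ℝ) (v : ι → ℝ) : ofRealVec (c • v) = (c : ℂ) • ofRealVec v := by
  ext i; simp

theorem continuous_ofRealVec : Continuous (ofRealVec : (ι → ℝ) → ι → ℂ) :=
  continuous_pi fun i => Complex.continuous_ofReal.comp (continuous_apply i)

theorem aeval_ofRealVec (p : MvPolynomial ι ℝ) (v : ι → ℝ) :
    MvPolynomial.aeval (ofRealVec v) p = (MvPolynomial.eval v p : ℂ) :=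
  MvPolynomial.aeval_algebraMap_apply ℂ v p

theorem aeval_ofRealVec_add_smul (p : MvPolynomial ι ℝ) (v e : ι → ℝ) (t : ℝ) :
    MvPolynomial.aeval (ofRealVec v + (t : ℂ) • ofRealVec e) p =
      (MvPolynomial.eval (v + t • e) p : ℂ) := by
  rw [← ofRealVec_smul, ← ofRealVec_add, aeval_ofRealVec]

theorem aeval_ofRealVec_ne_zero {p : MvPolynomial ι ℝ} {v : ι → ℝ}
    (hv : MvPolynomial.eval v p ≠ 0) : MvPolynomial.aeval (ofRealVec v) p ≠ 0 := by
  rwa [aeval_ofRealVec, Complex.ofReal_ne_zero]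

theorem aeval_conj (p : MvPolynomial ι ℝ) (w : ι → ℂ) :
    MvPolynomial.aeval (fun i => (starRingEnd ℂ) (w i)) p =
      (starRingEnd ℂ) (MvPolynomial.aeval w p) :=
  (DFunLike.congr_fun (MvPolynomial.comp_aeval w (Complex.conjAe : ℂ →ₐ[ℝ] ℂ)) p).symm

def IsRealRootedAlong (p : MvPolynomial ι ℝ) (e : ι → ℝ) : Prop :=
  ∀ (v : ι → ℝ) (s : ℂ), MvPolynomial.aeval (ofRealVec v + s • ofRealVec e) p = 0 → s.im = 0

theorem Hyperbolic.isRealRootedAlong {n : ℕ} {p : MvPolynomial (Fin n) ℝ} {e : Fin n → ℝ}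
    (hyp : Hyperbolic p e) : IsRealRootedAlong p e := by
  intro v s hs
  refine hyp.2 v s ?_
  rw [← AlgHom.comp_apply, MvPolynomial.comp_aeval, ← hs]
  congr 2
  funext i
  simp only [map_add, map_mul, Polynomial.aeval_C, Polynomial.aeval_X, Pi.add_apply,
    Pi.smul_apply, smul_eq_mul, ofRealVec_apply, Complex.coe_algebraMap]
  ring

end RealPoints

section RayCone

variable {ι : Type*} {d : ℕ}

/-- The vectors whose `e`-eigenvalues (the negatives of the roots of `t ↦ p(v + t e)`) are all
positive. -/
def rayCone (p : MvPolynomial ι ℝ) (e : ι → ℝ) : Set (ι → ℝ) :=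
  {v | ∀ t : ℝ, 0 ≤ t → MvPolynomial.eval (v + t • e) p ≠ 0}

variable {p : MvPolynomial ι ℝ} {e x v : ι → ℝ}

theorem eval_ne_zero_of_mem_rayCone (hv : v ∈ rayCone p e) : MvPolynomial.eval v p ≠ 0 := by
  simpa using hv 0 le_rfl

theorem add_smul_mem_rayCone (hv : v ∈ rayCone p e) {τ : ℝ} (hτ : 0 ≤ τ) :
    v + τ • e ∈ rayCone p e := by
  intro t ht
  rw [add_assoc, ← add_smul]
  exact hv _ (add_nonneg hτ ht)

theorem smul_mem_rayCone (hp : p.IsHomogeneous d) (hv : v ∈ rayCone p e) {c : ℝ} (hc : 0 < c) :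
    c • v ∈ rayCone p e := by
  intro t ht
  rw [show c • v + t • e = c • (v + (t / c) • e) by
    rw [smul_add, smul_smul, mul_div_cancel₀ _ hc.ne'], hp.eval_smul]
  exact mul_ne_zero (pow_ne_zero _ hc.ne') (hv _ (div_nonneg ht hc.le))

theorem mem_rayCone_iff (hre : IsRealRootedAlong p e) :
    v ∈ rayCone p e ↔
      ∀ s : ℂ, MvPolynomial.aeval (ofRealVec v + s • ofRealVec e) p = 0 → s.re < 0 := by
  constructor
  · intro hv s hs
    have hs' : s = (s.re : ℂ) := Complex.ext rfl (by simp [hre v s hs])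
    rw [hs', aeval_ofRealVec_add_smul, Complex.ofReal_eq_zero] at hs
    by_contra! hre'
    exact hv _ hre' hs
  · intro h t ht h0
    have := h t (by rw [aeval_ofRealVec_add_smul, h0, Complex.ofReal_zero])
    rw [Complex.ofReal_re] at this
    linarith

variable (hp : p.IsHomogeneous d) (he : MvPolynomial.eval e p ≠ 0)
include hp he

theorem self_mem_rayCone : e ∈ rayCone p e := by
  intro t ht
  rw [show e + t • e = (1 + t) • e by rw [add_smul, one_smul], hp.eval_smul]
  exact mul_ne_zero (pow_ne_zero _ (by linarith)) he

theorem starConvex_rayCone : StarConvex ℝ e (rayCone p e) := by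
  intro v hv a b ha hb hab
  rcases hb.eq_or_lt with rfl | hb
  · rw [add_zero] at hab
    simpa [hab] using self_mem_rayCone hp he
  · rw [show a • e + b • v = b • (v + (a / b) • e) by
      rw [smul_add, smul_smul, mul_div_cancel₀ _ hb.ne', add_comm]]
    exact smul_mem_rayCone hp (add_smul_mem_rayCone hv (div_nonneg ha hb.le)) hb

theorem mem_rayCone_swap (hx : x ∈ rayCone p e) : e ∈ rayCone p x := by
  intro t ht
  rcases ht.eq_or_lt with rfl | ht
  · simpa using he
  · rw [show e + t • x = t • (x + t⁻¹ • e) by rw [smul_add, smul_inv_smul₀ ht.ne', add_comm],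
      hp.eval_smul]
    exact mul_ne_zero (pow_ne_zero _ ht.ne') (hx _ (inv_nonneg.mpr ht.le))

variable (hre : IsRealRootedAlong p e)
include hre

theorem im_neg_of_aeval_I_smul_add_eq_zero (hx : x ∈ rayCone p e) {u : ℂ}
    (hu : MvPolynomial.aeval (Complex.I • ofRealVec e + u • ofRealVec x) p = 0) : u.im < 0 := by
  have hu0 : u ≠ 0 := by
    rintro rfl
    rw [zero_smul, add_zero, hp.aeval_smul, aeval_ofRealVec] at hu
    simp [he] at hu
  set s := Complex.I / u with hs_def
  have hs : MvPolynomial.aeval (ofRealVec x + s • ofRealVec e) p = 0 := by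
    have := hp.aeval_smul u (ofRealVec x + s • ofRealVec e)
    rw [smul_add, smul_smul, mul_div_cancel₀ _ hu0, add_comm, hu] at this
    exact (mul_eq_zero.mp this.symm).resolve_left (pow_ne_zero _ hu0)
  have hs_real : (s.re : ℂ) = s := Complex.ext (by simp) (by simp [hre x s hs])
  calc u.im = (Complex.I / (s.re : ℂ)).im := by
        rw [hs_real, hs_def, div_div_cancel₀ Complex.I_ne_zero]
    _ = 1 / s.re := by simp
    _ < 0 := one_div_neg.mpr ((mem_rayCone_iff hre).mp hx s hs)

theorem im_neg_of_aeval_smul_add_I_smul_add_eq_zero (hx : x ∈ rayCone p e) (y : ι → ℝ) (r : ℝ)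
    {u : ℂ} (hu : MvPolynomial.aeval
      ((r : ℂ) • ofRealVec y + Complex.I • ofRealVec e + u • ofRealVec x) p = 0) :
    u.im < 0 := by
  refine mem_of_isPreconnected_of_roots_notMem_frontier hp
    (aeval_ofRealVec_ne_zero (eval_ne_zero_of_mem_rayCone hx)) isPreconnected_univ
    (f := fun r : ℝ => (r : ℂ) • ofRealVec y + Complex.I • ofRealVec e) (by fun_prop)
    (isOpen_lt Complex.continuous_im continuous_const) ?_ (Set.mem_univ 0) ?_ (Set.mem_univ r) hu
  · intro t _ s hs hfr
    replace hfr : s.im = 0 := by simpa using hfr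
    have := hre (t • y + s.re • x) Complex.I (by
      rw [← hs]
      congr 1
      ext i
      apply Complex.ext <;> simp [hfr])
    simp at this
  · intro s hs
    rw [Complex.ofReal_zero, zero_smul, zero_add] at hs
    exact im_neg_of_aeval_I_smul_add_eq_zero hp he hre hx hs

theorem IsRealRootedAlong.of_mem_rayCone (hx : x ∈ rayCone p e) : IsRealRootedAlong p x := by
  have hx' := aeval_ofRealVec_ne_zero (eval_ne_zero_of_mem_rayCone hx)
  -- A root in the upper half-plane survives the perturbation `v ↦ v + i ε e` for small `ε > 0`;
  -- rescaling by `ε⁻¹` then contradicts the previous lemma.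
  have hupper : ∀ (v : ι → ℝ) (s : ℂ), 0 < s.im →
      MvPolynomial.aeval (ofRealVec v + s • ofRealVec x) p ≠ 0 := by
    intro v s hs hroot
    have hB : IsOpen
        {w | ∃ s ∈ {s : ℂ | 0 < s.im}, MvPolynomial.aeval (w + s • ofRealVec x) p = 0} :=
      isOpen_setOf_exists_root hp hx' (isOpen_lt continuous_const Complex.continuous_im)
    have hg : Continuous fun ε : ℝ => ofRealVec v + ((ε : ℂ) * Complex.I) • ofRealVec e := by
      fun_prop
    have hB₀ : ofRealVec v + (((0 : ℝ) : ℂ) * Complex.I) • ofRealVec e ∈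
        {w | ∃ s ∈ {s : ℂ | 0 < s.im}, MvPolynomial.aeval (w + s • ofRealVec x) p = 0} :=
      ⟨s, hs, by simpa using hroot⟩
    obtain ⟨ε, hε, s', hs', hroot'⟩ :=
      ((eventually_mem_nhdsWithin (s := Set.Ioi (0 : ℝ)) (a := 0)).and
        (nhdsWithin_le_nhds (hg.continuousAt.preimage_mem_nhds (hB.mem_nhds hB₀)))).exists
    have hscaled : MvPolynomial.aeval (((ε⁻¹ : ℝ) : ℂ) • ofRealVec v + Complex.I • ofRealVec e +
        (((ε⁻¹ : ℝ) : ℂ) * s') • ofRealVec x) p = 0 := by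
      have := hp.aeval_smul ((ε⁻¹ : ℝ) : ℂ)
        (ofRealVec v + ((ε : ℂ) * Complex.I) • ofRealVec e + s' • ofRealVec x)
      rw [hroot', mul_zero] at this
      have hε0 : (ε : ℂ) ≠ 0 := Complex.ofReal_ne_zero.mpr (ne_of_gt hε)
      rw [← this]
      congr 2
      funext i
      simp only [Pi.add_apply, Pi.smul_apply, smul_eq_mul, Complex.ofReal_inv]
      field_simp
    have := im_neg_of_aeval_smul_add_I_smul_add_eq_zero hp he hre hx v ε⁻¹ hscaled
    rw [Complex.im_ofReal_mul] at this
    linarith [mul_pos (inv_pos.mpr hε) (show 0 < s'.im from hs')]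
  intro v s hs
  by_contra hne
  rcases lt_or_gt_of_ne hne with hlt | hgt
  · apply hupper v (starRingEnd ℂ s) (by simpa using hlt)
    have := aeval_conj p (ofRealVec v + s • ofRealVec x)
    rw [hs, map_zero] at this
    rw [← this]
    congr 1
    ext i
    simp
  · exact hupper v s hgt hs

theorem rayCone_subset_rayCone_of_mem (hx : x ∈ rayCone p e) : rayCone p e ⊆ rayCone p x := by
  intro z hz
  have hrex := IsRealRootedAlong.of_mem_rayCone hp he hre hx
  rw [mem_rayCone_iff hrex]
  intro s hs
  -- Along the segment from `e` to `z` the roots are real and never `0`, so they stay negative.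
  refine mem_of_isPreconnected_of_roots_notMem_frontier hp
    (aeval_ofRealVec_ne_zero (eval_ne_zero_of_mem_rayCone hx)) isPreconnected_Icc
    (f := fun t : ℝ => ofRealVec ((1 - t) • e + t • z)) (continuous_ofRealVec.comp (by fun_prop))
    (isOpen_lt Complex.continuous_re continuous_const) ?_ (Set.left_mem_Icc.2 zero_le_one) ?_
    (Set.right_mem_Icc.2 zero_le_one) (by simpa using hs)
  · rintro t ⟨ht0, ht1⟩ s hs hfr
    have hs0 : s = 0 := Complex.ext (by simpa using hfr) (by simpa using hrex _ s hs)
    rw [hs0, zero_smul, add_zero, aeval_ofRealVec, Complex.ofReal_eq_zero] at hs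
    exact eval_ne_zero_of_mem_rayCone
      (starConvex_rayCone hp he hz (by linarith) ht0 (by ring)) hs
  · intro s hs
    simp only [sub_zero, one_smul, zero_smul, add_zero] at hs
    exact (mem_rayCone_iff hrex).mp (mem_rayCone_swap hp he hx) s hs

theorem rayCone_eq_of_mem (hx : x ∈ rayCone p e) : rayCone p x = rayCone p e :=
  (rayCone_subset_rayCone_of_mem hp (eval_ne_zero_of_mem_rayCone hx)
    (IsRealRootedAlong.of_mem_rayCone hp he hre hx) (mem_rayCone_swap hp he hx)).antisymm
    (rayCone_subset_rayCone_of_mem hp he hre hx)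

theorem convex_rayCone : Convex ℝ (rayCone p e) := fun _ hx =>
  rayCone_eq_of_mem hp he hre hx ▸ starConvex_rayCone hp (eval_ne_zero_of_mem_rayCone hx)

theorem isOpen_rayCone : IsOpen (rayCone p e) := by
  have : rayCone p e = ofRealVec ⁻¹'
      {w | ∀ s, MvPolynomial.aeval (w + s • ofRealVec e) p = 0 → s ∈ {s : ℂ | s.re < 0}} :=
    Set.ext fun v => mem_rayCone_iff hre
  rw [this]
  exact (isOpen_setOf_roots_subset hp (aeval_ofRealVec_ne_zero he)
    (isOpen_lt Complex.continuous_re continuous_const)).preimage continuous_ofRealVec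

theorem isOpen_setOf_eval_ne_zero_diff_rayCone :
    IsOpen ({v | MvPolynomial.eval v p ≠ 0} \ rayCone p e) := by
  have : {v | MvPolynomial.eval v p ≠ 0} \ rayCone p e = {v | MvPolynomial.eval v p ≠ 0} ∩
      ofRealVec ⁻¹'
        {w | ∃ s ∈ {s : ℂ | 0 < s.re}, MvPolynomial.aeval (w + s • ofRealVec e) p = 0} := by
    ext v
    simp only [rayCone, Set.mem_sdiff, Set.mem_inter_iff, Set.mem_preimage, Set.mem_ofPred_eq]
    push Not
    refine and_congr_right fun hv =>
      ⟨fun ⟨t, ht, h0⟩ => ⟨t, ?_, ?_⟩, fun ⟨s, hs, h0⟩ => ⟨s.re, hs.le, ?_⟩⟩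
    · rw [Complex.ofReal_re]
      refine ht.lt_of_ne ?_
      rintro rfl
      exact hv (by simpa using h0)
    · rw [aeval_ofRealVec_add_smul, h0, Complex.ofReal_zero]
    · have hs' : s = (s.re : ℂ) := Complex.ext rfl (by simp [hre v s h0])
      rwa [hs', aeval_ofRealVec_add_smul, Complex.ofReal_eq_zero] at h0
  rw [this]
  exact (isOpen_ne_fun (MvPolynomial.continuous_eval p) continuous_const).inter
    ((isOpen_setOf_exists_root hp (aeval_ofRealVec_ne_zero he)
      (isOpen_lt continuous_const Complex.continuous_re)).preimage continuous_ofRealVec)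

theorem connectedComponentIn_eq_rayCone :
    connectedComponentIn {v | MvPolynomial.eval v p ≠ 0} e = rayCone p e := by
  refine Set.Subset.antisymm ?_
    ((convex_rayCone hp he hre).isPreconnected.subset_connectedComponentIn
      (self_mem_rayCone hp he) fun v hv => eval_ne_zero_of_mem_rayCone hv)
  refine isPreconnected_connectedComponentIn.subset_left_of_subset_union
    (isOpen_rayCone hp he hre) (isOpen_setOf_eval_ne_zero_diff_rayCone hp he hre)
    Set.disjoint_sdiff_right (fun v hv => ?_)
    ⟨e, mem_connectedComponentIn he, self_mem_rayCone hp he⟩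
  rw [Set.union_sdiff_self]
  exact Or.inr (connectedComponentIn_subset _ _ hv)

end RayCone

/-- (Garding) If a homogeneous polynomial `p` is hyperbolic with respect to `e`, then its
hyperbolicity cone `K(p, e)` is an open convex cone. -/
theorem stmt1 (n d : ℕ) (p : MvPolynomial (Fin n) ℝ) (e : Fin n → ℝ)
    (hhom : p.IsHomogeneous d) (hyp : Hyperbolic p e) :
    IsOpen (hypCone p e) ∧ Convex ℝ (hypCone p e) ∧
      ∀ c : ℝ, 0 < c → ∀ x ∈ hypCone p e, c • x ∈ hypCone p e := by
  have he : MvPolynomial.eval e p ≠ 0 := hyp.1.ne'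
  have hre := hyp.isRealRootedAlong
  rw [hypCone, connectedComponentIn_eq_rayCone hhom he hre]
  exact ⟨isOpen_rayCone hhom he hre, convex_rayCone hhom he hre,
    fun c hc x hx => smul_mem_rayCone hhom hx hc⟩
end

section
/- If a sequence of real univariate polynomials of degree at most n, each real-rooted, converges coefficient-wise to a polynomial p, then p is real-rooted. -/
/-!
For a real-rooted `p` and real `x`, `s ↦ |p(x + is)|` is nondecreasing in `|s|`, because every
linear factor `|x + is - r|` with `r` real is. So if `q(z) = 0`, then along the sequence
`|pᵢ(re z + is)| ≤ |pᵢ(z)| → |q(z)| = 0` for `|s| ≤ |im z|`, and `q` vanishes on the whole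
vertical segment through `z`. Unless `im z = 0` that is infinitely many roots, forcing `q = 0`.
No control of the leading coefficients (which may tend to zero) is needed.
-/

open Polynomial

/-- A univariate real polynomial is real-rooted if it is identically zero or
all of its complex roots are real. -/
def RealRooted (q : Polynomial ℝ) : Prop :=
  q = 0 ∨ ∀ z : ℂ, Polynomial.aeval z q = 0 → z.im = 0

open Filter Topology

theorem Polynomial.Splits.norm_eval_le_norm_eval {K : Type*} [NormedField K] {f : K[X]}
    (hf : f.Splits) {w z : K} (h : ∀ r ∈ f.roots, ‖w - r‖ ≤ ‖z - r‖) :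
    ‖f.eval w‖ ≤ ‖f.eval z‖ := by
  have hnorm (x : K) : ‖(f.roots.map (x - ·)).prod‖ = (f.roots.map (‖x - ·‖)).prod := by
    simpa [Multiset.map_map] using map_multiset_prod (normHom : K →*₀ ℝ) (f.roots.map (x - ·))
  rw [hf.eval_eq_prod_roots, hf.eval_eq_prod_roots, norm_mul, norm_mul, hnorm, hnorm]
  gcongr
  exact Multiset.prod_map_le_prod_map₀ _ _ (fun _ _ => norm_nonneg _) h

theorem Complex.norm_sub_ofReal_le_of_abs_im_le {w z : ℂ} (hre : w.re = z.re)
    (him : |w.im| ≤ |z.im|) (r : ℝ) : ‖w - r‖ ≤ ‖z - r‖ := by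
  rw [← sq_le_sq₀ (norm_nonneg _) (norm_nonneg _), Complex.sq_norm, Complex.sq_norm,
    Complex.normSq_apply, Complex.normSq_apply]
  simp only [sub_re, ofReal_re, sub_im, ofReal_im, sub_zero, hre]
  nlinarith [sq_le_sq.mpr him]

theorem RealRooted.norm_aeval_le {p : ℝ[X]} (hp : RealRooted p) {w z : ℂ} (hre : w.re = z.re)
    (him : |w.im| ≤ |z.im|) : ‖aeval w p‖ ≤ ‖aeval z p‖ := by
  rcases hp with rfl | hp
  · simp
  rw [aeval_def, aeval_def, ← eval_map, ← eval_map]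
  refine (IsAlgClosed.splits _).norm_eval_le_norm_eval fun r hr => ?_
  have hr_real : (r.re : ℂ) = r := Complex.ext rfl (by simp [hp r (mem_aroots'.mp hr).2])
  rw [← hr_real]
  exact Complex.norm_sub_ofReal_le_of_abs_im_le hre him r.re

theorem Polynomial.tendsto_aeval_of_tendsto_coeff {ι R A : Type*} [CommSemiring R]
    [TopologicalSpace R] [Semiring A] [Algebra R A] [TopologicalSpace A] [ContinuousSMul R A]
    [ContinuousAdd A] {l : Filter ι} {p : ι → R[X]} {q : R[X]} {n : ℕ}
    (hp : ∀ i, (p i).natDegree ≤ n) (hq : q.natDegree ≤ n)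
    (h : ∀ k ≤ n, Tendsto (fun i => (p i).coeff k) l (𝓝 (q.coeff k))) (x : A) :
    Tendsto (fun i => aeval x (p i)) l (𝓝 (aeval x q)) := by
  simp only [aeval_eq_sum_range' (Nat.lt_succ_of_le (hp _)),
    aeval_eq_sum_range' (Nat.lt_succ_of_le hq)]
  exact tendsto_finsetSum _ fun k hk =>
    (h k (Nat.lt_succ_iff.mp (Finset.mem_range.mp hk))).smul_const _

theorem RealRooted.of_aeval_eq_zero_on_vertical_segments {q : ℝ[X]}
    (h : ∀ z : ℂ, aeval z q = 0 → ∀ s : ℝ, |s| ≤ |z.im| → aeval (⟨z.re, s⟩ : ℂ) q = 0) :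
    RealRooted q := by
  refine or_iff_not_imp_right.mpr fun hq => ?_
  push Not at hq
  obtain ⟨z, hz, him⟩ := hq
  have hinj : Set.InjOn (fun s : ℝ => (⟨z.re, s⟩ : ℂ)) (Set.Icc 0 |z.im|) :=
    fun s _ t _ hst => (Complex.ext_iff.mp hst).2
  have hinf : Set.Infinite {w : ℂ | (q.map (algebraMap ℝ ℂ)).IsRoot w} := by
    refine ((Set.Icc_infinite (abs_pos.mpr him)).image hinj).mono ?_
    rintro _ ⟨s, hs, rfl⟩
    have hs_abs : |s| ≤ |z.im| := abs_le.mpr ⟨by linarith [hs.1, abs_nonneg z.im], hs.2⟩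
    simpa [IsRoot, eval_map_algebraMap] using h z hz s hs_abs
  exact (Polynomial.map_eq_zero_iff (algebraMap ℝ ℂ).injective).mp
    (eq_zero_of_infinite_isRoot _ hinf)

/-- If a sequence of real-rooted real polynomials of degree at most `n` converges
coefficient-wise to a polynomial `q` (of degree at most `n`), then `q` is real-rooted. -/
theorem stmt5 (n : ℕ) (p : ℕ → Polynomial ℝ) (hdeg : ∀ i, (p i).degree ≤ (n : WithBot ℕ))
    (hrr : ∀ i, RealRooted (p i)) (q : Polynomial ℝ) (hq : q.degree ≤ (n : WithBot ℕ))
    (hconv : ∀ k ≤ n,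
      Filter.Tendsto (fun i => (p i).coeff k) Filter.atTop (nhds (q.coeff k))) :
    RealRooted q := by
  have hlim (w : ℂ) : Tendsto (fun i => aeval w (p i)) atTop (𝓝 (aeval w q)) :=
    tendsto_aeval_of_tendsto_coeff (fun i => natDegree_le_iff_degree_le.mpr (hdeg i))
      (natDegree_le_iff_degree_le.mpr hq) hconv w
  refine RealRooted.of_aeval_eq_zero_on_vertical_segments fun z hz s hs => ?_
  have hz_lim : Tendsto (fun i => ‖aeval z (p i)‖) atTop (𝓝 0) := by
    simpa [hz] using (hlim z).norm
  exact norm_le_zero_iff.mp <|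
    le_of_tendsto_of_tendsto' (hlim _).norm hz_lim fun i => (hrr i).norm_aeval_le rfl hs
end

section
/- Let p_γ(x) = Σ_{k=0}^{n} (−1)^k x^{n−k} c_k(γ) where c₀,…,cₙ ∈ ℝ[γ] have degree at most d and c₀ is not identically zero. For each k ≥ 0, there exists a polynomial r_k ∈ ℝ[γ] of degree at most dk such that for every γ with c₀(γ) ≠ 0, the k-th power sum m_k(γ) of the complex roots of p_γ equals r_k(γ)/c₀(γ)^k. -/
/-!
Over `ℂ` the polynomial `p_γ` splits and has leading coefficient `c₀(γ)`, so Vieta's formulas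
read `c_j(γ) = c₀(γ) e_j` with `e_j` the elementary symmetric functions of its roots. Newton's
identities `m_{k+1} = ± (k+1) e_{k+1} + Σ_{i<k} ± e_{i+1} m_{k-i}` then show, by strong induction,
that `c₀^k m_k` satisfies a recursion whose terms `c_{i+1} c₀^i (c₀^{k-i} m_{k-i})` are
polynomials in `γ` of degree at most `d (k+1)`.
-/

open Polynomial Finset

theorem Multiset.sum_map_pow_succ_eq_newton {R : Type*} [CommRing R] (s : Multiset R) (k : ℕ) :
    (s.map (· ^ (k + 1))).sum = (-1) ^ k * (k + 1) * s.esymm (k + 1) +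
      ∑ i ∈ Finset.range k, (-1) ^ i * s.esymm (i + 1) * (s.map (· ^ (k - i))).sum := by
  set x := s.toList.get
  have hx : univ.val.map x = s := by rw [Fin.univ_val_map, List.ofFn_get, Multiset.coe_toList]
  have hpsum (m : ℕ) : MvPolynomial.aeval x (MvPolynomial.psum _ R m) = (s.map (· ^ m)).sum := by
    simp only [MvPolynomial.psum, map_sum, map_pow, MvPolynomial.aeval_X]
    conv_rhs => rw [← hx, Multiset.map_map]
    rfl
  have hesymm (m : ℕ) : MvPolynomial.aeval x (MvPolynomial.esymm _ R m) = s.esymm m := by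
    rw [MvPolynomial.aeval_esymm_eq_multiset_esymm, hx]
  have H := congrArg (MvPolynomial.aeval x)
    (MvPolynomial.psum_eq_mul_esymm_sub_sum (Fin s.toList.length) R (k + 1) k.succ_pos)
  simp only [map_sum, map_sub, map_mul, map_pow, map_neg, map_one, map_natCast, hpsum,
    hesymm] at H
  rw [H, sum_filter, Nat.sum_antidiagonal_eq_sum_range_succ
    (fun i j => if i ∈ Set.Ioo 0 (k + 1) then (-1) ^ i * s.esymm i * (s.map (· ^ j)).sum else 0),
    sum_range_succ, sum_range_succ']
  simp only [Set.mem_Ioo, lt_self_iff_false, and_false, if_false, add_zero, false_and]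
  rw [sub_eq_add_neg, ← sum_neg_distrib]
  congr 1
  · push_cast; ring
  · refine sum_congr rfl fun i hi => ?_
    rw [if_pos (by simp at hi; omega), Nat.add_sub_add_right]
    ring

section newtonPsum

variable {R : Type*} [CommRing R]

-- Newton's identities with the denominators `a 0` cleared; `a j` plays the role of `a 0 * e_j`.
def newtonPsum (n : ℕ) (a : ℕ → R) : ℕ → R
  | 0 => n
  | k + 1 => (((-1) ^ k * (k + 1) : ℤ) : R) * a (k + 1) * a 0 ^ k +
      ∑ i ∈ range k, (((-1) ^ i : ℤ) : R) * a (i + 1) * a 0 ^ i * newtonPsum n a (k - i)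
decreasing_by omega

theorem map_newtonPsum {S : Type*} [CommRing S] (f : R →+* S) (n : ℕ) (a : ℕ → R) (k : ℕ) :
    f (newtonPsum n a k) = newtonPsum n (f ∘ a) k := by
  induction k using Nat.strong_induction_on with
  | _ k ih =>
    cases k with
    | zero => simp [newtonPsum]
    | succ k =>
      rw [newtonPsum, newtonPsum]
      simp only [map_add, map_mul, map_sum, map_pow, map_intCast, Function.comp_apply]
      congr 1
      exact sum_congr rfl fun i hi => by rw [ih _ (by omega)]

theorem natDegree_newtonPsum_le {n d : ℕ} {a : ℕ → R[X]} (ha : ∀ j, (a j).natDegree ≤ d)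
    (k : ℕ) : (newtonPsum n a k).natDegree ≤ d * k := by
  induction k using Nat.strong_induction_on with
  | _ k ih =>
    cases k with
    | zero => simp [newtonPsum]
    | succ k =>
      rw [newtonPsum]
      refine natDegree_add_le_of_degree_le ?_ (natDegree_sum_le_of_forall_le _ _ fun i hi => ?_)
      · calc _ ≤ 0 + d + k * d :=
              natDegree_mul_le_of_le (natDegree_mul_le_of_le (natDegree_intCast _).le (ha _))
                (natDegree_pow_le_of_le k (ha 0))
          _ = d * (k + 1) := by ring
      · have hi : i < k := mem_range.1 hi
        calc _ ≤ 0 + d + i * d + d * (k - i) :=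
              natDegree_mul_le_of_le (natDegree_mul_le_of_le (natDegree_mul_le_of_le
                (natDegree_intCast _).le (ha _)) (natDegree_pow_le_of_le i (ha 0))) (ih _ (by omega))
          _ = d * (k + 1) := by
              zify [hi.le]; ring

theorem newtonPsum_card_eq_mul_sum_map_pow (s : Multiset R) {a : ℕ → R}
    (ha : ∀ j, a j = a 0 * s.esymm j) (k : ℕ) :
    newtonPsum (Multiset.card s) a k = a 0 ^ k * (s.map (· ^ k)).sum := by
  induction k using Nat.strong_induction_on with
  | _ k ih =>
    cases k with
    | zero => simp [newtonPsum]
    | succ k =>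
      rw [newtonPsum, s.sum_map_pow_succ_eq_newton, mul_add (a 0 ^ (k + 1)), mul_sum]
      congr 1
      · rw [ha (k + 1)]; push_cast; ring
      · refine sum_congr rfl fun i hi => ?_
        have hi : i < k := mem_range.1 hi
        rw [ha (i + 1), ih _ (by omega), show k + 1 = i + 1 + (k - i) by omega, pow_add]
        push_cast; ring

end newtonPsum

section alternatingPoly

variable {R : Type*} [CommRing R] {n : ℕ} {a : ℕ → R}

noncomputable def alternatingPoly (n : ℕ) (a : ℕ → R) : R[X] :=
  ∑ j ∈ range (n + 1), C ((-1) ^ j * a j) * X ^ (n - j)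

theorem coeff_alternatingPoly_sub {j : ℕ} (hj : j ≤ n) :
    (alternatingPoly n a).coeff (n - j) = (-1) ^ j * a j := by
  rw [alternatingPoly, finsetSum_coeff, sum_eq_single_of_mem j (mem_range.2 (by omega))]
  · rw [coeff_C_mul_X_pow, if_pos rfl]
  · intro i hi hij
    rw [coeff_C_mul_X_pow, if_neg (by simp at hi; omega)]

theorem coeff_alternatingPoly_self : (alternatingPoly n a).coeff n = a 0 := by
  simpa using coeff_alternatingPoly_sub (a := a) n.zero_le

theorem natDegree_alternatingPoly_le : (alternatingPoly n a).natDegree ≤ n :=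
  natDegree_sum_le_of_forall_le _ _ fun j _ =>
    (natDegree_C_mul_X_pow_le _ _).trans (Nat.sub_le n j)

theorem natDegree_alternatingPoly (ha : a 0 ≠ 0) : (alternatingPoly n a).natDegree = n :=
  natDegree_alternatingPoly_le.antisymm
    (le_natDegree_of_ne_zero (coeff_alternatingPoly_self.trans_ne ha))

theorem leadingCoeff_alternatingPoly (ha : a 0 ≠ 0) :
    (alternatingPoly n a).leadingCoeff = a 0 := by
  rw [leadingCoeff, natDegree_alternatingPoly ha, coeff_alternatingPoly_self]

theorem map_alternatingPoly {S : Type*} [CommRing S] (f : R →+* S) :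
    (alternatingPoly n a).map f = alternatingPoly n (f ∘ a) := by
  simp [alternatingPoly, Polynomial.map_sum]

end alternatingPoly

section IsAlgClosed

variable {K : Type*} [Field K] [IsAlgClosed K] {n : ℕ} {a : ℕ → K}

theorem card_roots_alternatingPoly (ha : a 0 ≠ 0) :
    Multiset.card (alternatingPoly n a).roots = n := by
  rw [IsAlgClosed.card_roots_eq_natDegree, natDegree_alternatingPoly ha]

theorem esymm_roots_alternatingPoly (ha : a 0 ≠ 0) (j : ℕ) :
    (if j ≤ n then a j else 0) = a 0 * (alternatingPoly n a).roots.esymm j := by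
  split_ifs with hj
  · have hcard : Multiset.card (alternatingPoly n a).roots = (alternatingPoly n a).natDegree := by
      rw [IsAlgClosed.card_roots_eq_natDegree]
    have h := coeff_eq_esymm_roots_of_card hcard (k := n - j)
      (by simp [natDegree_alternatingPoly ha])
    rw [coeff_alternatingPoly_sub hj, leadingCoeff_alternatingPoly ha,
      natDegree_alternatingPoly ha, Nat.sub_sub_self hj] at h
    exact mul_left_cancel₀ (pow_ne_zero j (neg_ne_zero.2 one_ne_zero)) (h.trans (by ring))
  · have hcard := card_roots_alternatingPoly (n := n) ha
    rw [Multiset.esymm, Multiset.powersetCard_eq_empty _ (by omega)]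
    simp

end IsAlgClosed

theorem stmt7_general (n d : ℕ) (c : ℕ → Polynomial ℝ) (hd : ∀ k ≤ n, (c k).degree ≤ (d : WithBot ℕ))
    (k : ℕ) :
    ∃ r : Polynomial ℝ, r.degree ≤ ((d * k : ℕ) : WithBot ℕ) ∧
      ∀ γ : ℝ, (c 0).eval γ ≠ 0 →
        (((∑ j ∈ Finset.range (n + 1),
              Polynomial.C ((-1 : ℝ) ^ j * (c j).eval γ) * Polynomial.X ^ (n - j)).map
            (algebraMap ℝ ℂ)).roots.map (fun z => z ^ k)).sum
          = ((r.eval γ / ((c 0).eval γ) ^ k : ℝ) : ℂ) := by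
  -- truncated because `e_j` vanishes for `j > n`, whatever `c j` is
  set a : ℕ → ℝ[X] := fun j => if j ≤ n then c j else 0 with ha
  refine ⟨newtonPsum n a k, ?_, fun γ hγ => ?_⟩
  · refine degree_le_of_natDegree_le (natDegree_newtonPsum_le (fun j => ?_) k)
    by_cases hj : j ≤ n
    · simpa [ha, hj] using natDegree_le_of_degree_le (hd j hj)
    · simp [ha, hj]
  set φ : ℝ[X] →+* ℂ := (algebraMap ℝ ℂ).comp (evalRingHom γ)
  have hφ0 : φ (c 0) ≠ 0 := by simpa [φ] using hγ
  have hP : (∑ j ∈ range (n + 1), C ((-1 : ℝ) ^ j * (c j).eval γ) * X ^ (n - j)).map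
      (algebraMap ℝ ℂ) = alternatingPoly n (φ ∘ c) :=
    map_alternatingPoly (algebraMap ℝ ℂ) (a := fun j => (c j).eval γ)
  have hφa (j : ℕ) : (φ ∘ a) j = if j ≤ n then (φ ∘ c) j else 0 := by
    split_ifs <;> simp [*]
  have hroots (j : ℕ) :
      (φ ∘ a) j = (φ ∘ a) 0 * (alternatingPoly n (φ ∘ c)).roots.esymm j := by
    rw [hφa, hφa, if_pos n.zero_le]
    exact esymm_roots_alternatingPoly hφ0 j
  have key := newtonPsum_card_eq_mul_sum_map_pow _ hroots k
  rw [card_roots_alternatingPoly hφ0, ← map_newtonPsum] at key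
  rw [hP, Complex.ofReal_div, Complex.ofReal_pow,
    eq_div_iff (pow_ne_zero k (by exact_mod_cast hγ))]
  exact (key.trans (mul_comm _ _)).symm

/-- For the one-parameter family `p_γ(x) = Σ_{k=0}^n (−1)^k x^{n−k} c_k(γ)` with
`c_k ∈ ℝ_d[γ]` and `c₀` not identically zero, the `k`-th power sum of the complex roots
of `p_γ` equals `r_k(γ) / c₀(γ)^k` for a polynomial `r_k` of degree at most `d·k`,
whenever `c₀(γ) ≠ 0`. -/
theorem stmt7 (n d : ℕ) (c : ℕ → Polynomial ℝ) (hd : ∀ k ≤ n, (c k).degree ≤ (d : WithBot ℕ))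
    (hc0 : c 0 ≠ 0) (k : ℕ) :
    ∃ r : Polynomial ℝ, r.degree ≤ ((d * k : ℕ) : WithBot ℕ) ∧
      ∀ γ : ℝ, (c 0).eval γ ≠ 0 →
        (((∑ j ∈ Finset.range (n + 1),
              Polynomial.C ((-1 : ℝ) ^ j * (c j).eval γ) * Polynomial.X ^ (n - j)).map
            (algebraMap ℝ ℂ)).roots.map (fun z => z ^ k)).sum
          = ((r.eval γ / ((c 0).eval γ) ^ k : ℝ) : ℂ) :=
  stmt7_general n d c hd k
end

section
/- Let p be a real univariate polynomial of degree n with leading coefficient aₙ ≠ 0 and complex roots x₁,…,xₙ (with multiplicity), and let M_p be its n×n moment matrix, M_p = V Vᵀ where V is the n×n Vandermonde matrix whose columns are (1, xᵢ, …, xᵢ^{n−1}). Then for each 1 ≤ k ≤ n, the leading principal k×k minor of M_p equals Σ_{S ⊆ {1,…,n}, |S| = k} Π_{{i,j} ⊆ S, i≠j} (xᵢ − xⱼ)², which equals aₙ^{2−2k} · sDisc_k(p). -/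
/-!
The leading `k × k` block of the moment matrix is `Wᵀ W`, where `W` is the `n × k` matrix with
rows `(1, xⱼ, …, xⱼ^{k-1})`. By the Cauchy–Binet formula its determinant is the sum, over
`k`-subsets `S`, of the squared `k × k` minors of `W`, and the minor on the rows `S` is the
Vandermonde determinant of `(xⱼ)_{j ∈ S}`. The second identity is then the definition of `sDisc`.

Cauchy–Binet itself comes from expanding `det (A B)` multilinearly over all column selections
`f : Fin k → ι`: the terms with `f` not injective vanish, and an injective `f` factors uniquely as
a strictly monotone map composed with a permutation, whose sign is absorbed by the minor.
-/

open Finset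

/-- The `k`-th subdiscriminant of a degree-`n` polynomial with leading coefficient `a`
and roots `x₁, …, xₙ` (with multiplicity):
`sDisc_k = a^{2k−2} Σ_{|S|=k} Π_{{i,j}⊆S} (xᵢ − xⱼ)²`. -/
noncomputable def sDisc (n : ℕ) (a : ℂ) (x : Fin n → ℂ) (k : ℕ) : ℂ :=
  a ^ (2 * k - 2) *
    ∑ S ∈ (Finset.univ : Finset (Fin n)).powersetCard k,
      ∏ pr ∈ (S ×ˢ S).filter (fun pr => pr.1 < pr.2), (x pr.1 - x pr.2) ^ 2

/-- The moment matrix of the roots `x₁, …, xₙ`: `(M_p)_{k,l} = Σᵢ xᵢ^{k+l−2}`. -/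
noncomputable def momentMatrix (n : ℕ) (x : Fin n → ℂ) : Matrix (Fin n) (Fin n) ℂ :=
  Matrix.of fun k l : Fin n => ∑ i, x i ^ ((k : ℕ) + (l : ℕ))

open Matrix Equiv

namespace Finset

open Classical in
theorem sum_injective_eq_sum_strictMono_sum_perm {k : ℕ} {ι M : Type*} [LinearOrder ι]
    [Fintype ι] [AddCommMonoid M] (F : (Fin k → ι) → M) :
    ∑ f : Fin k → ι with Function.Injective f, F f =
      ∑ g : Fin k → ι with StrictMono g, ∑ σ : Perm (Fin k), F (g ∘ σ) := by
  rw [sum_sigma']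
  symm
  refine sum_bij' (fun p _ => p.1 ∘ p.2) (fun f _ => ⟨f ∘ Tuple.sort f, (Tuple.sort f)⁻¹⟩)
    ?_ ?_ ?_ ?_ fun _ _ => rfl
  · rintro ⟨g, σ⟩ h
    simp only [mem_sigma, mem_filter_univ, mem_univ, and_true] at h ⊢
    exact h.injective.comp σ.injective
  · intro f hf
    simp only [mem_sigma, mem_filter_univ, mem_univ, and_true] at hf ⊢
    exact (Tuple.monotone_sort f).strictMono_of_injective (hf.comp (Tuple.sort f).injective)
  · rintro ⟨g, σ⟩ h
    simp only [mem_sigma, mem_filter_univ, mem_univ, and_true] at h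
    set τ := Tuple.sort (g ∘ σ)
    have hmono : StrictMono ((g ∘ σ) ∘ τ) :=
      (Tuple.monotone_sort (g ∘ σ)).strictMono_of_injective (h.injective.comp (σ * τ).injective)
    have hg : (g ∘ σ) ∘ τ = g := by
      rw [← hmono.range_inj h]
      exact (σ * τ).surjective.range_comp g
    have hστ : σ * τ = 1 := Equiv.ext fun i => h.injective (congrFun hg i)
    exact Sigma.ext hg (heq_of_eq (inv_eq_of_mul_eq_one_left hστ))
  · intro f _
    ext i
    simp

open Classical in
theorem sum_strictMono_eq_sum_powersetCard {k : ℕ} {ι M : Type*} [LinearOrder ι]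
    [Fintype ι] [AddCommMonoid M] (F : Finset ι → M) :
    ∑ g : Fin k → ι with StrictMono g, F (univ.image g) = ∑ S ∈ univ.powersetCard k, F S := by
  refine sum_bij' (fun g _ => univ.image g)
    (fun S hS => S.orderEmbOfFin (mem_powersetCard_univ.mp hS)) ?_ ?_ ?_ ?_ fun _ _ => rfl
  · intro g hg
    rw [mem_filter_univ] at hg
    rw [mem_powersetCard_univ, card_image_of_injective _ hg.injective, card_univ, Fintype.card_fin]
  · intro S _
    simpa only [mem_filter_univ] using (S.orderEmbOfFin _).strictMono
  · intro g hg
    rw [mem_filter_univ] at hg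
    exact (orderEmbOfFin_unique _ (fun i => mem_image_of_mem g (mem_univ i)) hg).symm
  · intro S _
    exact image_orderEmbOfFin_univ S _

theorem prod_filter_lt_comp_strictMono {k : ℕ} {ι M : Type*} [LinearOrder ι]
    [CommMonoid M] {g : Fin k → ι} (hg : StrictMono g) (h : ι × ι → M) :
    ∏ pr ∈ univ.filter (fun pr : Fin k × Fin k => pr.1 < pr.2), h (g pr.1, g pr.2) =
      ∏ pr ∈ (univ.image g ×ˢ univ.image g).filter (fun pr => pr.1 < pr.2), h pr := by
  have hinj : Function.Injective (Prod.map g g) := hg.injective.prodMap hg.injective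
  refine (prod_image hinj.injOn).symm.trans (congrArg (∏ pr ∈ ·, h pr) ?_)
  ext ⟨a, b⟩
  simp only [mem_image, mem_filter, mem_univ, true_and, mem_product, Prod.exists, Prod.map,
    Prod.mk.injEq]
  constructor
  · rintro ⟨i, j, hij, rfl, rfl⟩
    exact ⟨⟨⟨i, rfl⟩, ⟨j, rfl⟩⟩, hg hij⟩
  · rintro ⟨⟨⟨i, rfl⟩, ⟨j, rfl⟩⟩, hij⟩
    exact ⟨i, j, hg.lt_iff_lt.mp hij, rfl, rfl⟩

end Finset

namespace Matrix

variable {R : Type*} [CommRing R]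

theorem det_mul_eq_sum_prod_mul_det_submatrix {m n : Type*} [Fintype m] [DecidableEq m]
    [Fintype n] (A : Matrix m n R) (B : Matrix n m R) :
    (A * B).det = ∑ f : m → n, (∏ i, B (f i) i) * (A.submatrix id f).det := by
  simp only [det_apply', mul_apply, prod_univ_sum, mul_sum, Fintype.piFinset_univ]
  rw [sum_comm]
  refine sum_congr rfl fun f _ => sum_congr rfl fun σ _ => ?_
  simp only [submatrix_apply, id_eq, prod_mul_distrib]
  ring

theorem det_submatrix_id_eq_zero_of_not_injective {m n : Type*} [Fintype m] [DecidableEq m]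
    (A : Matrix m n R) {f : m → n} (hf : ¬Function.Injective f) : (A.submatrix id f).det = 0 := by
  obtain ⟨i, j, hfij, hij⟩ : ∃ i j, f i = f j ∧ i ≠ j := by
    simpa [Function.Injective] using hf
  exact det_zero_of_column_eq hij fun l => by simp [hfij]

open Classical in
theorem det_mul_eq_sum_det_mul_det {k : ℕ} {ι : Type*} [LinearOrder ι]
    [Fintype ι] (A : Matrix (Fin k) ι R) (B : Matrix ι (Fin k) R) :
    (A * B).det =
      ∑ g : Fin k → ι with StrictMono g, (A.submatrix id g).det * (B.submatrix g id).det := by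
  rw [det_mul_eq_sum_prod_mul_det_submatrix,
    ← sum_filter_of_ne (p := Function.Injective) fun f _ h => ?_,
    sum_injective_eq_sum_strictMono_sum_perm]
  · refine sum_congr rfl fun g _ => ?_
    rw [det_apply' (B.submatrix g id), mul_sum]
    refine sum_congr rfl fun σ _ => ?_
    rw [show A.submatrix id (g ∘ σ) = (A.submatrix id g).submatrix id σ from rfl, det_permute']
    simp only [submatrix_apply, id_eq, Function.comp_apply]
    ring
  · by_contra hf
    exact h (by rw [det_submatrix_id_eq_zero_of_not_injective A hf, mul_zero])

open Classical in
theorem det_transpose_mul_self_eq_sum_sq {k : ℕ} {ι : Type*}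
    [LinearOrder ι] [Fintype ι] (A : Matrix ι (Fin k) R) :
    (Aᵀ * A).det = ∑ g : Fin k → ι with StrictMono g, (A.submatrix g id).det ^ 2 := by
  rw [det_mul_eq_sum_det_mul_det]
  exact sum_congr rfl fun g _ => by rw [← transpose_submatrix, det_transpose, sq]

theorem det_vandermonde_sq {k : ℕ} (v : Fin k → R) :
    (vandermonde v).det ^ 2 =
      ∏ pr ∈ univ.filter (fun pr : Fin k × Fin k => pr.1 < pr.2), (v pr.1 - v pr.2) ^ 2 := by
  rw [det_vandermonde, ← prod_pow, ← univ_product_univ, prod_filter, prod_product]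
  refine prod_congr rfl fun i _ => ?_
  rw [← prod_pow, ← filter_lt_eq_Ioi, prod_filter]
  exact prod_congr rfl fun j _ => by rw [sub_sq_comm]

end Matrix

theorem momentMatrix_submatrix_castLE {n k : ℕ} (x : Fin n → ℂ) (hk : k ≤ n) :
    (momentMatrix n x).submatrix (Fin.castLE hk) (Fin.castLE hk) =
      (Matrix.of fun (j : Fin n) (i : Fin k) => x j ^ (i : ℕ))ᵀ *
        Matrix.of fun (j : Fin n) (i : Fin k) => x j ^ (i : ℕ) := by
  ext i l
  simp only [momentMatrix, submatrix_apply, of_apply, mul_apply, transpose_apply, Fin.val_castLE,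
    pow_add]

theorem stmt11_general (n : ℕ) (a : ℝ) (x : Fin n → ℂ)
    (k : ℕ) (hk : k ≤ n) :
    ((momentMatrix n x).submatrix (Fin.castLE hk) (Fin.castLE hk)).det =
        (∑ S ∈ (Finset.univ : Finset (Fin n)).powersetCard k,
          ∏ pr ∈ (S ×ˢ S).filter (fun pr => pr.1 < pr.2), (x pr.1 - x pr.2) ^ 2) ∧
      (a : ℂ) ^ (2 * k - 2) *
          ((momentMatrix n x).submatrix (Fin.castLE hk) (Fin.castLE hk)).det =
        sDisc n (a : ℂ) x k := by
  have hminor : ((momentMatrix n x).submatrix (Fin.castLE hk) (Fin.castLE hk)).det =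
      ∑ S ∈ univ.powersetCard k,
        ∏ pr ∈ (S ×ˢ S).filter (fun pr => pr.1 < pr.2), (x pr.1 - x pr.2) ^ 2 := by
    rw [momentMatrix_submatrix_castLE, det_transpose_mul_self_eq_sum_sq,
      ← sum_strictMono_eq_sum_powersetCard]
    refine sum_congr rfl fun g hg => ?_
    rw [mem_filter_univ] at hg
    rw [← prod_filter_lt_comp_strictMono hg fun pr => (x pr.1 - x pr.2) ^ 2]
    exact det_vandermonde_sq (x ∘ g)
  exact ⟨hminor, by rw [hminor]; rfl⟩

/-- For a real polynomial of degree `n` with nonzero leading coefficient `a` and complex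
roots `x₁, …, xₙ` (with multiplicity), the leading principal `k × k` minor of the moment
matrix equals `Σ_{|S|=k} Π_{{i,j}⊆S}(xᵢ − xⱼ)²`, which equals `a^{2−2k}·sDisc_k(p)`. -/
theorem stmt11 (n : ℕ) (p : Polynomial ℝ) (a : ℝ) (ha : a ≠ 0)
    (hdeg : p.natDegree = n) (hlead : p.leadingCoeff = a) (x : Fin n → ℂ)
    (hroots : p.map (algebraMap ℝ ℂ) =
      Polynomial.C ((a : ℂ)) * ∏ i, (Polynomial.X - Polynomial.C (x i)))
    (k : ℕ) (hk1 : 1 ≤ k) (hk : k ≤ n) :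
    ((momentMatrix n x).submatrix (Fin.castLE hk) (Fin.castLE hk)).det =
        (∑ S ∈ (Finset.univ : Finset (Fin n)).powersetCard k,
          ∏ pr ∈ (S ×ˢ S).filter (fun pr => pr.1 < pr.2), (x pr.1 - x pr.2) ^ 2) ∧
      (a : ℂ) ^ (2 * k - 2) *
          ((momentMatrix n x).submatrix (Fin.castLE hk) (Fin.castLE hk)).det =
        sDisc n (a : ℂ) x k :=
  stmt11_general n a x k hk
end
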